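/- arXiv:2206.12030 — 4 statements merged into one kernel-verified Lean document; each statement's English description precedes it below -/
import Mathlib

section
/- Doubling lemma for task reduction (Lemma A.1): In a deterministic goal-conditioned transition system, let ℓ ∈ ℕ and let π be a deterministic goal-conditioned policy that reaches g from s for every pair (s, g) with d(s, g) ≤ ℓ. Let π′ be a policy satisfying the task-reduction update property with respect to π: for every pair (s, g), if there exists a state s_B such that π reaches s_B from s (when executed toward goal s_B) and π reaches g from s_B (when executed toward goal g), then π′ reaches g from s. Then π′ reaches g from s for every pair (s, g) with d(s, g) ≤ 2ℓ. -/
/-- The final state after executing an action list from a state in a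
deterministic goal-conditioned transition system with transition function `t`. -/
def run {S A : Type*} (t : S → A → S) : S → List A → S
  | s, [] => s
  | s, a :: L => run t (t s a) L

/-- `gdist t s g` is the least number of steps needed to go from `s` to `g`
(`⊤` if `g` is unreachable from `s`). -/
noncomputable def gdist {S A : Type*} (t : S → A → S) (s g : S) : ℕ∞ :=
  sInf {n : ℕ∞ | ∃ L : List A, (L.length : ℕ∞) = n ∧ run t s L = g}

/-- The state reached after `n` steps of executing the deterministic
goal-conditioned policy `π` from state `s` toward goal `g`. -/
def polIter {S A : Type*} (t : S → A → S) (π : S → S → A) (g s : S) : ℕ → S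
  | 0 => s
  | n + 1 => t (polIter t π g s n) (π (polIter t π g s n) g)

/-- The policy `π` reaches goal `g` from state `s`: the rollout of `π` from `s`
toward `g` visits `g` at some step. -/
def polReaches {S A : Type*} (t : S → A → S) (π : S → S → A) (s g : S) : Prop :=
  ∃ n : ℕ, polIter t π g s n = g

theorem run_append {S A : Type*} (t : S → A → S) (L₁ L₂ : List A) (s : S) :
    run t s (L₁ ++ L₂) = run t (run t s L₁) L₂ := by
  induction L₁ generalizing s with
  | nil => rfl
  | cons a L ih => simp [run, ih]

theorem gdist_le_run {S A : Type*} (t : S → A → S) (s : S) (L : List A) :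
    gdist t s (run t s L) ≤ (L.length : ℕ∞) :=
  sInf_le ⟨L, rfl, rfl⟩

/-- Doubling lemma for task reduction: if `π` solves every pair with `d(s, g) ≤ ℓ`
and `π'` satisfies the task-reduction update property with respect to `π`, then `π'`
solves every pair with `d(s, g) ≤ 2ℓ`. -/
theorem doubling_lemma {S A : Type*} (t : S → A → S) (ℓ : ℕ) (π π' : S → S → A)
    (hπ : ∀ s g : S, gdist t s g ≤ (ℓ : ℕ∞) → polReaches t π s g)
    (hπ' : ∀ s g : S,
      (∃ sB : S, polReaches t π s sB ∧ polReaches t π sB g) → polReaches t π' s g) :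
    ∀ s g : S, gdist t s g ≤ ((2 * ℓ : ℕ) : ℕ∞) → polReaches t π' s g := by
  intro s g h
  obtain ⟨L, hlen, hrun⟩ : ∃ L : List A, L.length ≤ 2 * ℓ ∧ run t s L = g := by
    by_contra hc
    push_neg at hc
    have hlb : ((2 * ℓ : ℕ) : ℕ∞) + 1 ≤ gdist t s g := by
      apply le_sInf
      rintro n ⟨L, rfl, hL⟩
      have hlt : 2 * ℓ < L.length := lt_of_not_ge fun hle => hc L hle hL
      exact_mod_cast Nat.succ_le_of_lt hlt
    have h2 : ((2 * ℓ : ℕ) : ℕ∞) + 1 ≤ ((2 * ℓ : ℕ) : ℕ∞) := hlb.trans h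
    norm_cast at h2
    omega
  set L₁ := L.take ℓ with hL₁
  set L₂ := L.drop ℓ with hL₂
  have hsplit : run t (run t s L₁) L₂ = g := by
    rw [← run_append, List.take_append_drop, hrun]
  have h₁ : gdist t s (run t s L₁) ≤ (ℓ : ℕ∞) := by
    refine (gdist_le_run t s L₁).trans ?_
    exact_mod_cast (L.length_take_le ℓ)
  have h₂ : gdist t (run t s L₁) g ≤ (ℓ : ℕ∞) := by
    rw [← hsplit]
    refine (gdist_le_run t _ L₂).trans ?_
    have : L₂.length ≤ ℓ := by
      simp only [hL₂, List.length_drop]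
      omega
    exact_mod_cast this
  exact hπ' s g ⟨run t s L₁, hπ _ _ h₁, hπ _ _ h₂⟩
end

section
/- Monotonicity of solvable start states in the chain: In the chain system with parameter D, if a deterministic goal-conditioned policy π, executed toward goal s_D, reaches s_D from s_i (for some 0 ≤ i ≤ D), then π executed toward goal s_D reaches s_D from s_j for every j with i ≤ j ≤ D. -/
/-- The transition function of the chain system with parameter `D`: states are
`s_0, …, s_D, s_{D+1}`; for `i ≤ D`, action `true` moves `s_i` to `s_{i+1}` and
action `false` moves to the absorbing sink `s_{D+1}`. -/
def chainStep (D : ℕ) (i : Fin (D + 2)) (a : Bool) : Fin (D + 2) :=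
  if h : (i : ℕ) ≤ D ∧ a = true then ⟨(i : ℕ) + 1, by omega⟩ else ⟨D + 1, by omega⟩

/-!
If `s_j` with `j < D` reaches `s_D`, its first step cannot go to the sink, which is absorbing
and different from `s_D`; so it goes to `s_{j+1}`, which then reaches `s_D` as well.
-/

section Rollout

variable {S A : Type*} {t : S → A → S} {π : S → S → A} {g s z : S}

theorem polIter_succ' (n : ℕ) : polIter t π g s (n + 1) = polIter t π g (t s (π s g)) n := by
  induction n with
  | zero => rfl
  | succ n ih => rw [polIter, ih, polIter]

theorem polIter_of_absorbing (hz : ∀ a, t z a = z) (n : ℕ) : polIter t π g z n = z := by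
  induction n with
  | zero => rfl
  | succ n ih => rw [polIter, ih, hz]

theorem not_polReaches_of_absorbing (hz : ∀ a, t z a = z) (hzg : z ≠ g) :
    ¬ polReaches t π z g :=
  fun ⟨n, hn⟩ => hzg (by rwa [polIter_of_absorbing hz] at hn)

theorem polReaches.of_step (h : polReaches t π s g) (hsg : s ≠ g) :
    polReaches t π (t s (π s g)) g := by
  obtain ⟨_ | n, hn⟩ := h
  · exact absurd hn hsg
  · exact ⟨n, by rwa [polIter_succ'] at hn⟩

end Rollout

section Chain

variable {D : ℕ}

theorem chainStep_last (a : Bool) : chainStep D (Fin.last (D + 1)) a = Fin.last (D + 1) :=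
  dif_neg (by simp)

theorem chainStep_eq_succ_or_last (s : Fin (D + 2)) (a : Bool) (hs : (s : ℕ) + 1 < D + 2) :
    chainStep D s a = ⟨s + 1, hs⟩ ∨ chainStep D s a = Fin.last (D + 1) := by
  unfold chainStep
  split_ifs
  · exact Or.inl rfl
  · exact Or.inr rfl

theorem chain_polReaches_succ {π : Fin (D + 2) → Fin (D + 2) → Bool} {s g : Fin (D + 2)}
    (h : polReaches (chainStep D) π s g) (hsg : s ≠ g) (hg : g ≠ Fin.last (D + 1))
    (hs : (s : ℕ) + 1 < D + 2) : polReaches (chainStep D) π ⟨s + 1, hs⟩ g := by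
  have hstep := h.of_step hsg
  rcases chainStep_eq_succ_or_last s (π s g) hs with hsucc | hsink
  · rwa [hsucc] at hstep
  · rw [hsink] at hstep
    exact absurd hstep (not_polReaches_of_absorbing chainStep_last hg.symm)

end Chain

/-- Monotonicity of solvable start states in the chain: if a deterministic
goal-conditioned policy `π`, executed toward goal `s_D`, reaches `s_D` from `s_i`
(`i ≤ D`), then it reaches `s_D` from `s_j` for every `i ≤ j ≤ D`. -/
theorem chain_solvable_mono (D : ℕ)
    (π : Fin (D + 2) → Fin (D + 2) → Bool) (i : ℕ) (hi : i ≤ D)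
    (h : polReaches (chainStep D) π ⟨i, by omega⟩ ⟨D, by omega⟩) :
    ∀ j : ℕ, (hj1 : i ≤ j) → (hj2 : j ≤ D) →
      polReaches (chainStep D) π ⟨j, by omega⟩ ⟨D, by omega⟩ := by
  intro j hj1 hj2
  induction j, hj1 using Nat.le_induction with
  | base => exact h
  | succ j _ ih =>
    exact chain_polReaches_succ (ih (by omega)) (by rw [Ne, Fin.mk.injEq]; omega)
      (by simp [Fin.ext_iff]) (by dsimp only; omega)
end

section
/- Total-variation Lipschitz bound for goal-reaching probabilities (simulation lemma underlying Theorems 3.1 and 3.2): Let S and A be finite types, t : S → A → S a deterministic transition function, and let π and π′ be stochastic goal-conditioned policies. If (1/2)·Σ_{a∈A} |π(a|s, g) − π′(a|s, g)| ≤ ε for every state s and goal g, then for every horizon T and every pair (s, g), |p_π(T, s, g) − p_{π′}(T, s, g)| ≤ ε·T. -/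
/-- `π` is a stochastic goal-conditioned policy: for each state-goal pair `(s, g)`,
`π s g` is a probability mass function on actions. -/
def IsPolicy {S A : Type*} [Fintype A] (π : S → S → A → ℝ) : Prop :=
  (∀ s g a, 0 ≤ π s g a) ∧ ∀ s g, ∑ a, π s g a = 1

/-- The `T`-step reach probability `p_π(T, s, g)` of goal `g` from state `s` under
stochastic goal-conditioned policy `π` and deterministic transition `t`. -/
def reachP {S A : Type*} [Fintype A] [DecidableEq S]
    (t : S → A → S) (π : S → S → A → ℝ) : ℕ → S → S → ℝ
  | 0, s, g => if s = g then 1 else 0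
  | n + 1, s, g => if s = g then 1 else ∑ a, π s g a * reachP t π n (t s a) g

lemma reachP_mem {S A : Type*} [Fintype A] [DecidableEq S]
    (t : S → A → S) (π : S → S → A → ℝ) (hπ : IsPolicy π) :
    ∀ (T : ℕ) (s g : S), 0 ≤ reachP t π T s g ∧ reachP t π T s g ≤ 1 := by
  intro T
  induction T with
  | zero => intro s g; simp [reachP]; split <;> norm_num
  | succ n ih =>
    intro s g
    simp only [reachP]
    split
    · norm_num
    · constructor
      · exact Finset.sum_nonneg fun a _ =>
          mul_nonneg (hπ.1 s g a) (ih (t s a) g).1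
      · calc ∑ a, π s g a * reachP t π n (t s a) g
            ≤ ∑ a, π s g a * 1 :=
              Finset.sum_le_sum fun a _ =>
                mul_le_mul_of_nonneg_left (ih (t s a) g).2 (hπ.1 s g a)
          _ = 1 := by simp [hπ.2 s g]

/-- Total-variation Lipschitz bound for goal-reaching probabilities: if the policies
`π` and `π'` are within total-variation distance `ε` at every state-goal pair, then
their `T`-step reach probabilities differ by at most `ε·T`. -/
theorem tv_lipschitz_reach_prob {S A : Type*} [Fintype S] [Fintype A] [DecidableEq S]
    (t : S → A → S) (π π' : S → S → A → ℝ)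
    (hπ : IsPolicy π) (hπ' : IsPolicy π') (ε : ℝ)
    (htv : ∀ s g : S, (1 / 2 : ℝ) * ∑ a, |π s g a - π' s g a| ≤ ε) :
    ∀ (T : ℕ) (s g : S), |reachP t π T s g - reachP t π' T s g| ≤ ε * T := by
  intro T
  induction T with
  | zero => intro s g; simp [reachP]
  | succ n ih =>
    intro s g
    simp only [reachP]
    split
    · simpa using mul_nonneg (le_trans (by positivity) (htv s g))
        (by positivity : (0:ℝ) ≤ (n+1 : ℕ))
    · have key : (∑ a, π s g a * reachP t π n (t s a) g)
          - (∑ a, π' s g a * reachP t π' n (t s a) g)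
          = (∑ a, (π s g a - π' s g a) * (reachP t π n (t s a) g - 1/2))
            + ∑ a, π' s g a * (reachP t π n (t s a) g - reachP t π' n (t s a) g) := by
        have h2 : ∑ a, (π s g a - π' s g a) * (1/2 : ℝ) = 0 := by
          rw [← Finset.sum_mul, Finset.sum_sub_distrib, hπ.2 s g, hπ'.2 s g]
          ring
        have h3 : ∑ a, (π s g a * reachP t π n (t s a) g
              - π' s g a * reachP t π' n (t s a) g)
            = ∑ a, ((π s g a - π' s g a) * (reachP t π n (t s a) g - 1/2)
              + π' s g a * (reachP t π n (t s a) g - reachP t π' n (t s a) g)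
              + (π s g a - π' s g a) * (1/2)) := by
          apply Finset.sum_congr rfl
          intro a _
          ring
        rw [← Finset.sum_sub_distrib, h3, Finset.sum_add_distrib,
          Finset.sum_add_distrib, h2, add_zero]
      rw [key]
      have hb1 : |∑ a, (π s g a - π' s g a) * (reachP t π n (t s a) g - 1/2)| ≤ ε := by
        calc |∑ a, (π s g a - π' s g a) * (reachP t π n (t s a) g - 1/2)|
            ≤ ∑ a, |(π s g a - π' s g a) * (reachP t π n (t s a) g - 1/2)| :=
              Finset.abs_sum_le_sum_abs _ _
          _ ≤ ∑ a, |π s g a - π' s g a| * (1/2) := by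
              apply Finset.sum_le_sum
              intro a _
              rw [abs_mul]
              apply mul_le_mul_of_nonneg_left _ (abs_nonneg _)
              rw [abs_le]
              have h := reachP_mem t π hπ n (t s a) g
              constructor <;> linarith [h.1, h.2]
          _ = (1/2) * ∑ a, |π s g a - π' s g a| := by
              rw [← Finset.sum_mul]; ring
          _ ≤ ε := htv s g
      have hb2 : |∑ a, π' s g a * (reachP t π n (t s a) g - reachP t π' n (t s a) g)|
          ≤ ε * n := by
        calc |∑ a, π' s g a * (reachP t π n (t s a) g - reachP t π' n (t s a) g)|
            ≤ ∑ a, |π' s g a * (reachP t π n (t s a) g - reachP t π' n (t s a) g)| :=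
              Finset.abs_sum_le_sum_abs _ _
          _ ≤ ∑ a, π' s g a * (ε * n) := by
              apply Finset.sum_le_sum
              intro a _
              rw [abs_mul, abs_of_nonneg (hπ'.1 s g a)]
              exact mul_le_mul_of_nonneg_left (ih (t s a) g) (hπ'.1 s g a)
          _ = ε * n := by rw [← Finset.sum_mul, hπ'.2 s g, one_mul]
      calc |_ + _| ≤ _ + _ := abs_add_le _ _
        _ ≤ ε + ε * n := add_le_add hb1 hb2
        _ = ε * (n + 1 : ℕ) := by push_cast; ring
end

section
/- Near-optimality of policies close to an optimal policy (analog of Theorem 3.2 for deterministic transitions): Let S and A be finite types, t : S → A → S a deterministic transition function, T a horizon, and ε ≥ 0. Let π and π̂ be stochastic goal-conditioned policies with (1/2)·Σ_{a∈A} |π(a|s, g) − π̂(a|s, g)| ≤ ε for every state s and goal g, and suppose π̂ is optimal for horizon T: p_{π̂}(T, s, g) ≥ p_{π″}(T, s, g) for every stochastic goal-conditioned policy π″ and every pair (s, g). Then for every stochastic goal-conditioned policy π′ and every pair (s, g), p_{π′}(T, s, g) − p_π(T, s, g) ≤ ε·T. -/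
open Finset

theorem sum_sub_mul_le_half_sum_abs {ι : Type*} (s : Finset ι) {p q f : ι → ℝ}
    (hpq : ∑ i ∈ s, p i = ∑ i ∈ s, q i) (hf₀ : ∀ i ∈ s, 0 ≤ f i) (hf₁ : ∀ i ∈ s, f i ≤ 1) :
    ∑ i ∈ s, (q i - p i) * f i ≤ 1 / 2 * ∑ i ∈ s, |p i - q i| := by
  have hpointwise : ∀ i ∈ s, (q i - p i) * f i ≤ (q i - p i + |p i - q i|) / 2 := by
    intro i hi
    rw [abs_sub_comm]
    rcases le_total 0 (q i - p i) with h | h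
    · rw [abs_of_nonneg h]; nlinarith [hf₁ i hi]
    · rw [abs_of_nonpos h]; nlinarith [hf₀ i hi]
  calc ∑ i ∈ s, (q i - p i) * f i ≤ ∑ i ∈ s, (q i - p i + |p i - q i|) / 2 :=
        sum_le_sum hpointwise
    _ = 1 / 2 * ∑ i ∈ s, |p i - q i| := by
      rw [← sum_div, sum_add_distrib, sum_sub_distrib, hpq]; ring

section

variable {S A : Type*} [Fintype A] [DecidableEq S] (t : S → A → S) {π : S → S → A → ℝ}

@[simp]
theorem reachP_self (n : ℕ) (g : S) : reachP t π n g g = 1 := by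
  cases n <;> simp [reachP]

theorem reachP_succ_of_ne {n : ℕ} {s g : S} (h : s ≠ g) :
    reachP t π (n + 1) s g = ∑ a, π s g a * reachP t π n (t s a) g := by
  rw [reachP, if_neg h]

theorem reachP_nonneg (hπ : ∀ s g a, 0 ≤ π s g a) (n : ℕ) (s g : S) :
    0 ≤ reachP t π n s g := by
  induction n generalizing s with
  | zero => unfold reachP; split_ifs <;> norm_num
  | succ n ih =>
    by_cases hsg : s = g
    · simp [hsg]
    rw [reachP_succ_of_ne t hsg]
    exact sum_nonneg fun a _ => mul_nonneg (hπ s g a) (ih _)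

theorem reachP_le_one (hπ : IsPolicy π) (n : ℕ) (s g : S) : reachP t π n s g ≤ 1 := by
  induction n generalizing s with
  | zero => unfold reachP; split_ifs <;> norm_num
  | succ n ih =>
    by_cases hsg : s = g
    · simp [hsg]
    rw [reachP_succ_of_ne t hsg]
    calc ∑ a, π s g a * reachP t π n (t s a) g ≤ ∑ a, π s g a * 1 :=
          sum_le_sum fun a _ => mul_le_mul_of_nonneg_left (ih _) (hπ.1 s g a)
      _ = 1 := by simp [hπ.2 s g]

theorem reachP_sub_le_of_tv_le {π' : S → S → A → ℝ} {ε : ℝ} (hπ : IsPolicy π)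
    (hπ' : IsPolicy π') (htv : ∀ s g, (1 / 2 : ℝ) * ∑ a, |π s g a - π' s g a| ≤ ε)
    (n : ℕ) (s g : S) : reachP t π' n s g - reachP t π n s g ≤ ε * n := by
  have hε : 0 ≤ ε := le_trans (by positivity) (htv s g)
  induction n generalizing s with
  | zero => simp [reachP]
  | succ n ih =>
    by_cases hsg : s = g
    · simp only [hsg, reachP_self, sub_self]; positivity
    rw [reachP_succ_of_ne t hsg, reachP_succ_of_ne t hsg]
    have hswitch : ∑ a, (π' s g a - π s g a) * reachP t π' n (t s a) g ≤ ε :=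
      (sum_sub_mul_le_half_sum_abs _ (by rw [hπ.2, hπ'.2])
        (fun a _ => reachP_nonneg t hπ'.1 n _ g) (fun a _ => reachP_le_one t hπ' n _ g)).trans
        (htv s g)
    have hfollow :
        ∑ a, π s g a * (reachP t π' n (t s a) g - reachP t π n (t s a) g) ≤ ε * n :=
      calc _ ≤ ∑ a, π s g a * (ε * n) :=
            sum_le_sum fun a _ => mul_le_mul_of_nonneg_left (ih _) (hπ.1 s g a)
        _ = ε * n := by rw [← sum_mul, hπ.2, one_mul]
    calc ∑ a, π' s g a * reachP t π' n (t s a) g - ∑ a, π s g a * reachP t π n (t s a) g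
        = ∑ a, (π' s g a - π s g a) * reachP t π' n (t s a) g
          + ∑ a, π s g a * (reachP t π' n (t s a) g - reachP t π n (t s a) g) := by
          rw [← sum_add_distrib, ← sum_sub_distrib]; congr 1 with a; ring
      _ ≤ ε + ε * n := add_le_add hswitch hfollow
      _ = ε * (n + 1 : ℕ) := by push_cast; ring

end

theorem near_optimality_of_close_policy_general {S A : Type*} [Fintype A]
    [DecidableEq S] (t : S → A → S) (T : ℕ) (ε : ℝ)
    (π πhat : S → S → A → ℝ) (hπ : IsPolicy π) (hπhat : IsPolicy πhat)
    (htv : ∀ s g : S, (1 / 2 : ℝ) * ∑ a, |π s g a - πhat s g a| ≤ ε)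
    (hopt : ∀ π'' : S → S → A → ℝ, IsPolicy π'' →
      ∀ s g : S, reachP t π'' T s g ≤ reachP t πhat T s g) :
    ∀ π' : S → S → A → ℝ, IsPolicy π' →
      ∀ s g : S, reachP t π' T s g - reachP t π T s g ≤ ε * T := by
  intro π' hπ' s g
  have hclose := reachP_sub_le_of_tv_le t hπ hπhat htv T s g
  linarith [hopt π' hπ' s g]

/-- Near-optimality of policies close to an optimal policy: if `π` is within
total-variation distance `ε` of a policy `π̂` that is optimal for horizon `T`, then
for every policy `π'` and every pair `(s, g)`,
`p_{π'}(T, s, g) − p_π(T, s, g) ≤ ε·T`. -/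
theorem near_optimality_of_close_policy {S A : Type*} [Fintype S] [Fintype A]
    [DecidableEq S] (t : S → A → S) (T : ℕ) (ε : ℝ) (hε : 0 ≤ ε)
    (π πhat : S → S → A → ℝ) (hπ : IsPolicy π) (hπhat : IsPolicy πhat)
    (htv : ∀ s g : S, (1 / 2 : ℝ) * ∑ a, |π s g a - πhat s g a| ≤ ε)
    (hopt : ∀ π'' : S → S → A → ℝ, IsPolicy π'' →
      ∀ s g : S, reachP t π'' T s g ≤ reachP t πhat T s g) :
    ∀ π' : S → S → A → ℝ, IsPolicy π' →
      ∀ s g : S, reachP t π' T s g - reachP t π T s g ≤ ε * T :=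
  near_optimality_of_close_policy_general t T ε π πhat hπ hπhat htv hopt
end
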